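/- arXiv:2409.18028 — 4 statements merged into one kernel-verified Lean document; each statement's English description precedes it below -/
import Mathlib

section
/- Let p ∈ (0,1) and let X be a real-valued random variable on a probability space such that X and −X have the same distribution (X is symmetric), |X| ≤ M almost surely for some M > 0, and P(X = 0) < 1. Then E[log(p + (1−p)·exp(X))] > 0. -/
open MeasureTheory Real

/-! Since `X` is symmetric, `E[g X] = E[g (-X)]`, so `2 E[g X] = E[g X + g (-X)]`. For
`g x = log (p + (1 - p) eˣ)` the symmetrisation is `g x + g (-x) = log (1 + 2p(1 - p)(cosh x - 1))`,
which vanishes at `0` and is positive elsewhere; as `X ≠ 0` with positive probability, the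
expectation is positive. -/

theorem integral_pos_of_map_eq_map_neg {Ω : Type*} [MeasurableSpace Ω] {μ : Measure Ω}
    {X : Ω → ℝ} (hX : Measurable X) (hsym : μ.map X = μ.map (fun ω => -X ω))
    (hX0 : μ {ω | X ω ≠ 0} ≠ 0) {g : ℝ → ℝ} (hg : Measurable g)
    (hgX : Integrable (fun ω => g (X ω)) μ)
    (hg_nonneg : ∀ x, 0 ≤ g x + g (-x)) (hg_pos : ∀ x, x ≠ 0 → 0 < g x + g (-x)) :
    0 < ∫ ω, g (X ω) ∂μ := by
  have hgX_neg : Integrable (fun ω => g (-X ω)) μ := by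
    have h := (integrable_map_measure hg.aestronglyMeasurable hX.aemeasurable).2 hgX
    rw [hsym] at h
    exact (integrable_map_measure hg.aestronglyMeasurable hX.neg.aemeasurable).1 h
  have hswap : ∫ ω, g (-X ω) ∂μ = ∫ ω, g (X ω) ∂μ := by
    rw [← integral_map (φ := fun ω => -X ω) hX.neg.aemeasurable hg.aestronglyMeasurable, ← hsym,
      integral_map hX.aemeasurable hg.aestronglyMeasurable]
  have hsum : 0 < ∫ ω, (g (X ω) + g (-X ω)) ∂μ := by
    rw [integral_pos_iff_support_of_nonneg (fun ω => hg_nonneg (X ω)) (hgX.add hgX_neg)]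
    exact (pos_iff_ne_zero.2 hX0).trans_le (measure_mono fun ω hω => (hg_pos _ hω).ne')
  rw [integral_add hgX hgX_neg, hswap] at hsum
  linarith

lemma mix_exp_mem_uIcc {p : ℝ} (hp : p ∈ Set.Icc (0 : ℝ) 1) (x : ℝ) :
    p + (1 - p) * exp x ∈ Set.uIcc 1 (exp x) := by
  rw [← segment_eq_uIcc]
  exact ⟨p, 1 - p, hp.1, sub_nonneg.2 hp.2, by ring, by ring⟩

lemma mix_exp_pos {p : ℝ} (hp : p ∈ Set.Icc (0 : ℝ) 1) (x : ℝ) : 0 < p + (1 - p) * exp x :=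
  lt_of_lt_of_le (lt_min one_pos (exp_pos x)) (mix_exp_mem_uIcc hp x).1

lemma abs_log_mix_exp_le {p : ℝ} (hp : p ∈ Set.Icc (0 : ℝ) 1) (x : ℝ) :
    |log (p + (1 - p) * exp x)| ≤ |x| := by
  have hlog : log (p + (1 - p) * exp x) ∈ Set.uIcc 0 x := by
    rcases Set.mem_uIcc.1 (mix_exp_mem_uIcc hp x) with ⟨h1, h2⟩ | ⟨h1, h2⟩
    · exact Set.mem_uIcc.2 (Or.inl ⟨log_nonneg h1, by simpa using log_le_log (by linarith) h2⟩)
    · exact Set.mem_uIcc.2 (Or.inr ⟨by simpa using log_le_log (exp_pos x) h1,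
        log_nonpos (mix_exp_pos hp x).le h2⟩)
  simpa using Set.abs_sub_left_of_mem_uIcc hlog

lemma mix_exp_mul_mix_exp_neg (p x : ℝ) :
    (p + (1 - p) * exp x) * (p + (1 - p) * exp (-x)) = 1 + 2 * p * (1 - p) * (cosh x - 1) := by
  rw [cosh_eq, exp_neg]
  field_simp
  ring

lemma log_mix_exp_add_log_mix_exp_neg {p : ℝ} (hp : p ∈ Set.Icc (0 : ℝ) 1) (x : ℝ) :
    log (p + (1 - p) * exp x) + log (p + (1 - p) * exp (-x))
      = log (1 + 2 * p * (1 - p) * (cosh x - 1)) := by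
  rw [← log_mul (mix_exp_pos hp x).ne' (mix_exp_pos hp (-x)).ne', mix_exp_mul_mix_exp_neg]

theorem delta_pos_general
    {Ω : Type*} [MeasurableSpace Ω] (μ : Measure Ω) [IsProbabilityMeasure μ]
    (X : Ω → ℝ) (hXmeas : Measurable X)
    (p M : ℝ) (hp : p ∈ Set.Ioo (0 : ℝ) 1)
    (hsym : μ.map X = μ.map (fun ω => -X ω))
    (hbdd : ∀ᵐ ω ∂μ, |X ω| ≤ M)
    (hnondeg : μ {ω | X ω = 0} < 1) :
    0 < ∫ ω, Real.log (p + (1 - p) * Real.exp (X ω)) ∂μ := by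
  have hp' : p ∈ Set.Icc (0 : ℝ) 1 := Set.Ioo_subset_Icc_self hp
  have hmeas : Measurable fun x => log (p + (1 - p) * exp x) := by fun_prop
  have hXint : Integrable X μ := Integrable.of_bound hXmeas.aestronglyMeasurable M hbdd
  have hint : Integrable (fun ω => log (p + (1 - p) * exp (X ω))) μ :=
    hXint.mono (hmeas.comp hXmeas).aestronglyMeasurable
      (ae_of_all _ fun ω => abs_log_mix_exp_le hp' (X ω))
  have hX0 : μ {ω | X ω ≠ 0} ≠ 0 := by
    change μ {ω | X ω = 0}ᶜ ≠ 0
    rw [prob_compl_eq_one_sub (measurableSet_eq_fun hXmeas measurable_const)]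
    exact (tsub_pos_iff_lt.2 hnondeg).ne'
  have hcoef : 0 < 2 * p * (1 - p) := by nlinarith [hp.1, hp.2]
  refine integral_pos_of_map_eq_map_neg hXmeas hsym hX0 hmeas hint (fun x => ?_) (fun x hx => ?_)
  · rw [log_mix_exp_add_log_mix_exp_neg hp']
    exact log_nonneg (by nlinarith [hcoef, one_le_cosh x])
  · rw [log_mix_exp_add_log_mix_exp_neg hp']
    exact log_pos (by nlinarith [hcoef, one_lt_cosh.2 hx])

/-- If `p ∈ (0,1)` and `X` is a symmetric real random variable on a probability space,
bounded by `M > 0` almost surely, with `P(X = 0) < 1`, then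
`E[log(p + (1-p)·exp(X))] > 0`. -/
theorem delta_pos
    {Ω : Type*} [MeasurableSpace Ω] (μ : Measure Ω) [IsProbabilityMeasure μ]
    (X : Ω → ℝ) (hXmeas : Measurable X)
    (p M : ℝ) (hp : p ∈ Set.Ioo (0 : ℝ) 1) (hM : 0 < M)
    (hsym : μ.map X = μ.map (fun ω => -X ω))
    (hbdd : ∀ᵐ ω ∂μ, |X ω| ≤ M)
    (hnondeg : μ {ω | X ω = 0} < 1) :
    0 < ∫ ω, Real.log (p + (1 - p) * Real.exp (X ω)) ∂μ :=
  delta_pos_general μ X hXmeas p M hp hsym hbdd hnondeg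
end

section
/- Let p ∈ (0,1) and let X be a real-valued random variable such that X and −X have the same distribution (X is symmetric) and |X| ≤ M almost surely for some M > 0. Then E[log(p + (1−p)·exp(X))] = E[log((1−p) + p·exp(X))], i.e., Δ(p,X) = Δ(1−p,X). -/
/-!
Factoring out `exp x` gives `log (p + (1 - p) eˣ) = x + log ((1 - p) + p e⁻ˣ)`. Taking
expectations at `x = X`, the first term has mean zero and the second has the mean of
`log ((1 - p) + p e^X)`, both because `X` and `-X` are identically distributed.
-/

open MeasureTheory Real ProbabilityTheory

lemma log_add_mul_exp {p q : ℝ} (hp : 0 ≤ p) (hq : 0 < q) (x : ℝ) :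
    log (p + q * exp x) = x + log (q + p * exp (-x)) := by
  have hfactor : p + q * exp x = exp x * (q + p * exp (-x)) := by
    rw [mul_add, mul_left_comm, ← exp_add, add_neg_cancel, exp_zero]
    ring
  rw [hfactor, log_mul (exp_ne_zero x) (by positivity), log_exp]

lemma abs_log_add_one_sub_mul_exp_le {p : ℝ} (hp0 : 0 < p) (hp1 : p ≤ 1) (x : ℝ) :
    |log (p + (1 - p) * exp x)| ≤ |x| + |log p| := by
  have hweight : 0 ≤ (1 - p) * exp x := mul_nonneg (sub_nonneg.2 hp1) (exp_pos x).le
  have hlower : log p ≤ log (p + (1 - p) * exp x) :=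
    log_le_log hp0 (le_add_of_nonneg_right hweight)
  have hupper : log (p + (1 - p) * exp x) ≤ |x| := by
    rw [← log_exp |x|]
    refine log_le_log (by linarith) ?_
    have h1 : 1 ≤ exp |x| := one_le_exp (abs_nonneg x)
    have h2 : exp x ≤ exp |x| := exp_le_exp.2 (le_abs_self x)
    nlinarith
  rw [abs_le]
  constructor <;> linarith [neg_abs_le (log p), abs_nonneg (log p), abs_nonneg x]

lemma MeasureTheory.Integrable.log_add_one_sub_mul_exp {Ω : Type*} [MeasurableSpace Ω]
    {μ : Measure Ω} [IsFiniteMeasure μ] {X : Ω → ℝ} (hX : Integrable X μ) {p : ℝ}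
    (hp0 : 0 < p) (hp1 : p ≤ 1) :
    Integrable (fun ω => log (p + (1 - p) * exp (X ω))) μ := by
  have hmeas : Measurable fun x => log (p + (1 - p) * exp x) := by fun_prop
  refine (hX.norm.add (integrable_const |log p|)).mono'
    (hmeas.comp_aemeasurable hX.aemeasurable).aestronglyMeasurable (ae_of_all _ fun ω => ?_)
  simpa using abs_log_add_one_sub_mul_exp_le hp0 hp1 (X ω)

lemma ProbabilityTheory.IdentDistrib.integral_eq_zero_of_neg {Ω : Type*} [MeasurableSpace Ω]
    {μ : Measure Ω} {X : Ω → ℝ} (h : IdentDistrib X (fun ω => -X ω) μ μ) :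
    ∫ ω, X ω ∂μ = 0 := by
  have hneg := h.integral_eq
  rw [integral_neg] at hneg
  linarith

theorem delta_symm_general
    {Ω : Type*} [MeasurableSpace Ω] (μ : Measure Ω) [IsProbabilityMeasure μ]
    (X : Ω → ℝ) (hXmeas : Measurable X)
    (p M : ℝ) (hp : p ∈ Set.Ioo (0 : ℝ) 1)
    (hsym : μ.map X = μ.map (fun ω => -X ω))
    (hbdd : ∀ᵐ ω ∂μ, |X ω| ≤ M) :
    ∫ ω, Real.log (p + (1 - p) * Real.exp (X ω)) ∂μ
      = ∫ ω, Real.log ((1 - p) + p * Real.exp (X ω)) ∂μ := by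
  obtain ⟨hp0, hp1⟩ := hp
  have hX : IdentDistrib X (fun ω => -X ω) μ μ :=
    ⟨hXmeas.aemeasurable, hXmeas.neg.aemeasurable, hsym⟩
  have hXint : Integrable X μ := .of_bound hXmeas.aestronglyMeasurable M hbdd
  let g : ℝ → ℝ := fun x => log ((1 - p) + p * exp x)
  have hg : Measurable g := by fun_prop
  have hgint : Integrable (fun ω => g (-X ω)) μ := by
    simpa [g, sub_sub_cancel] using
      hXint.neg.log_add_one_sub_mul_exp (p := 1 - p) (by linarith) (by linarith)
  calc ∫ ω, log (p + (1 - p) * exp (X ω)) ∂μ = ∫ ω, (X ω + g (-X ω)) ∂μ := by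
        congr 1 with ω
        exact log_add_mul_exp hp0.le (sub_pos.2 hp1) (X ω)
    _ = ∫ ω, X ω ∂μ + ∫ ω, g (-X ω) ∂μ := integral_add hXint hgint
    _ = ∫ ω, g (X ω) ∂μ := by
        rw [hX.integral_eq_zero_of_neg, zero_add]
        exact (hX.comp hg).integral_eq.symm

/-- For `p ∈ (0,1)` and a symmetric real random variable `X`, bounded by `M > 0`
almost surely, `Δ(p,X) = Δ(1-p,X)`, i.e.
`E[log(p + (1-p)·exp(X))] = E[log((1-p) + p·exp(X))]`. -/
theorem delta_symm
    {Ω : Type*} [MeasurableSpace Ω] (μ : Measure Ω) [IsProbabilityMeasure μ]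
    (X : Ω → ℝ) (hXmeas : Measurable X)
    (p M : ℝ) (hp : p ∈ Set.Ioo (0 : ℝ) 1) (hM : 0 < M)
    (hsym : μ.map X = μ.map (fun ω => -X ω))
    (hbdd : ∀ᵐ ω ∂μ, |X ω| ≤ M) :
    ∫ ω, Real.log (p + (1 - p) * Real.exp (X ω)) ∂μ
      = ∫ ω, Real.log ((1 - p) + p * Real.exp (X ω)) ∂μ :=
  delta_symm_general μ X hXmeas p M hp hsym hbdd
end

section
/- Let n ≥ 1, let P₀, P₁, …, Pₙ be nonnegative reals with P₀ + P₁ + ⋯ + Pₙ = 1 and P₀ ∈ (0,1), and let X₀, X₁, …, Xₙ be real numbers. Define the weighted average X := (Σ_{i=1}^{n} Pᵢ·(Xᵢ − X₀)) / (1 − P₀). Then (P₀·exp(X₀)) / (Σ_{i=0}^{n} Pᵢ·exp(Xᵢ)) ≤ P₀ / (P₀ + (1 − P₀)·exp(X)) = P₀·exp(−log(P₀ + (1 − P₀)·exp(X))). -/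
open Real Finset

/-!
Shifting all logits by `-X₀` rewrites the left-hand side as `P₀ / (P₀ + Σ Pᵢ exp(Xᵢ - X₀))`,
which decreases in the sum. By Jensen's inequality for `exp` with weights `Pᵢ / (1 - P₀)`,
that sum is at least `(1 - P₀) exp X`.
-/

theorem Real.sum_mul_exp_weighted_mean_le_sum_mul_exp {ι : Type*} (s : Finset ι) (w y : ι → ℝ)
    (hw : ∀ i ∈ s, 0 ≤ w i) (hpos : 0 < ∑ i ∈ s, w i) :
    (∑ i ∈ s, w i) * exp ((∑ i ∈ s, w i * y i) / ∑ i ∈ s, w i) ≤ ∑ i ∈ s, w i * exp (y i) := by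
  have jensen := convexOn_exp.map_centerMass_le hw hpos fun i _ => Set.mem_univ (y i)
  simp only [centerMass, smul_eq_mul, Function.comp_apply] at jensen
  rwa [inv_mul_eq_div, inv_mul_eq_div, le_div_iff₀ hpos, mul_comm] at jensen

theorem Real.mul_exp_div_add_sum_mul_exp_eq {ι : Type*} (s : Finset ι) (a x₀ : ℝ) (w x : ι → ℝ) :
    a * exp x₀ / (a * exp x₀ + ∑ i ∈ s, w i * exp (x i))
      = a / (a + ∑ i ∈ s, w i * exp (x i - x₀)) := by
  have hshift : ∑ i ∈ s, w i * exp (x i) = exp x₀ * ∑ i ∈ s, w i * exp (x i - x₀) := by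
    rw [mul_sum]
    refine sum_congr rfl fun i _ => ?_
    rw [exp_sub]
    field_simp
  rw [hshift, mul_comm a, ← mul_add, mul_div_mul_left _ _ (exp_pos x₀).ne']

theorem perturbed_softmax_bound_general (n : ℕ)
    (P₀ : ℝ) (P : Fin n → ℝ) (X₀ : ℝ) (X : Fin n → ℝ)
    (hP₀ : P₀ ∈ Set.Ioo (0 : ℝ) 1) (hP : ∀ i, 0 ≤ P i)
    (hsum : P₀ + ∑ i, P i = 1) :
    P₀ * Real.exp X₀ / (P₀ * Real.exp X₀ + ∑ i, P i * Real.exp (X i))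
        ≤ P₀ / (P₀ + (1 - P₀) * Real.exp ((∑ i, P i * (X i - X₀)) / (1 - P₀)))
    ∧ P₀ / (P₀ + (1 - P₀) * Real.exp ((∑ i, P i * (X i - X₀)) / (1 - P₀)))
        = P₀ * Real.exp
            (-Real.log (P₀ + (1 - P₀) * Real.exp ((∑ i, P i * (X i - X₀)) / (1 - P₀)))) := by
  obtain ⟨hP₀_pos, hP₀_lt_one⟩ := hP₀
  have hrest : ∑ i, P i = 1 - P₀ := by linarith
  have jensen := sum_mul_exp_weighted_mean_le_sum_mul_exp univ P (fun i => X i - X₀)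
    (fun i _ => hP i) (by linarith)
  rw [hrest] at jensen
  have hden : 0 < P₀ + (1 - P₀) * exp ((∑ i, P i * (X i - X₀)) / (1 - P₀)) :=
    add_pos hP₀_pos (mul_pos (by linarith) (exp_pos _))
  refine ⟨?_, ?_⟩
  · rw [mul_exp_div_add_sum_mul_exp_eq]
    exact div_le_div_of_nonneg_left hP₀_pos.le hden (by linarith)
  · rw [exp_neg, exp_log hden, div_eq_mul_inv]

/-- The single-decoding-step perturbation bound: for a probability vector
`(P₀, P₁, …, Pₙ)` with `P₀ ∈ (0,1)` and logit noises `(X₀, X₁, …, Xₙ)`, setting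
`X := (Σ_{i=1}^n Pᵢ·(Xᵢ - X₀)) / (1 - P₀)`, the perturbed softmax probability of
the correct token satisfies
`P₀·exp(X₀) / (Σ_{i=0}^n Pᵢ·exp(Xᵢ)) ≤ P₀ / (P₀ + (1-P₀)·exp(X))
  = P₀·exp(-log(P₀ + (1-P₀)·exp(X)))`. -/
theorem perturbed_softmax_bound (n : ℕ) (hn : 1 ≤ n)
    (P₀ : ℝ) (P : Fin n → ℝ) (X₀ : ℝ) (X : Fin n → ℝ)
    (hP₀ : P₀ ∈ Set.Ioo (0 : ℝ) 1) (hP : ∀ i, 0 ≤ P i)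
    (hsum : P₀ + ∑ i, P i = 1) :
    P₀ * Real.exp X₀ / (P₀ * Real.exp X₀ + ∑ i, P i * Real.exp (X i))
        ≤ P₀ / (P₀ + (1 - P₀) * Real.exp ((∑ i, P i * (X i - X₀)) / (1 - P₀)))
    ∧ P₀ / (P₀ + (1 - P₀) * Real.exp ((∑ i, P i * (X i - X₀)) / (1 - P₀)))
        = P₀ * Real.exp
            (-Real.log (P₀ + (1 - P₀) * Real.exp ((∑ i, P i * (X i - X₀)) / (1 - P₀)))) :=
  perturbed_softmax_bound_general n P₀ P X₀ X hP₀ hP hsum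
end

section
/- Let ε, δ ∈ (0,1) with ε < 1/2, let M, Δ, σ > 0, and let h(x) := (1+x)·log(1+x) − x. Let X₁, …, Xₙ be independent real-valued random variables, each satisfying: Xᵢ and −Xᵢ have the same distribution, |Xᵢ| ≤ M almost surely, and P(Xᵢ = 0) < 1. Let p₁, …, pₙ ∈ [ε, 1−ε] and set Zᵢ := log(pᵢ + (1−pᵢ)·exp(Xᵢ)). Suppose that for each i: E[Zᵢ] ≥ Δ, Var(Zᵢ) ≤ σ², and |Zᵢ − E[Zᵢ]| ≤ M almost surely. If n > (M²/(σ²·h(3·Δ·M/(4·σ²))))·log(1/δ), then with probability at least 1 − δ: Π_{i=1}^{n} pᵢ·exp(−Zᵢ) ≤ (Π_{i=1}^{n} pᵢ) · exp(−Δ·n/4). -/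
/-!
If the event fails then `∑ Zᵢ < Δn/4`, while `∑ E[Zᵢ] ≥ Δn`: the sum of the independent `Zᵢ`
falls `3Δn/4 = nσ²s/M` below its mean, with `s = 3ΔM/(4σ²)`. Bennett's inequality bounds the
probability of this by `exp (-(nσ²/M²) h(s))`; its proof is the Chernoff bound at
`l = log (1 + s) / M` combined with `E[exp (l Y)] ≤ exp ((exp (lM) - lM - 1) / M² · E[Y²])` for
centred `Y ≤ M`, which in turn comes from the monotonicity of `(exp u - u - 1) / u²`.
The lower bound on `n` makes `exp (-(nσ²/M²) h(s)) ≤ δ`.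
-/

open MeasureTheory ProbabilityTheory Real

/-- Bennett's rate function `h(x) = (1+x)·log(1+x) - x`. -/
noncomputable def bennettH (x : ℝ) : ℝ := (1 + x) * Real.log (1 + x) - x

/-- `(exp u - u - 1) / u ^ 2` (with value `1 / 2` at `0`), written as an integral so that
monotonicity is evident. -/
noncomputable def bennettPhi (u : ℝ) : ℝ := ∫ t in (0 : ℝ)..1, (1 - t) * exp (t * u)

lemma exp_sub_sub_one_eq_sq_mul_bennettPhi (u : ℝ) : exp u - u - 1 = u ^ 2 * bennettPhi u := by
  rcases eq_or_ne u 0 with rfl | hu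
  · simp
  have hderiv : ∀ t ∈ Set.uIcc (0 : ℝ) 1,
      HasDerivAt (fun s => exp (s * u) * ((u + 1) / u ^ 2 - s / u)) ((1 - t) * exp (t * u)) t := by
    intro t _
    have hexp : HasDerivAt (fun s => exp (s * u)) (exp (t * u) * u) t := by
      simpa using ((hasDerivAt_id t).mul_const u).exp
    have hlin : HasDerivAt (fun s => (u + 1) / u ^ 2 - s / u) (-(1 / u)) t := by
      simpa using ((hasDerivAt_id t).div_const u).const_sub ((u + 1) / u ^ 2)
    exact (hexp.mul hlin).congr_deriv (by field_simp; ring)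
  rw [bennettPhi, intervalIntegral.integral_eq_sub_of_hasDerivAt hderiv
    (by apply Continuous.intervalIntegrable; fun_prop)]
  field_simp
  rw [mul_zero, exp_zero]
  ring

lemma bennettPhi_monotone : Monotone bennettPhi := by
  intro u v huv
  refine intervalIntegral.integral_mono_on zero_le_one
    (by apply Continuous.intervalIntegrable; fun_prop)
    (by apply Continuous.intervalIntegrable; fun_prop) fun t ht => ?_
  have : t * u ≤ t * v := mul_le_mul_of_nonneg_left huv ht.1
  gcongr
  linarith [ht.2]

lemma exp_mul_le_of_le {l y M : ℝ} (hl : 0 ≤ l) (hM : M ≠ 0) (hy : y ≤ M) :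
    exp (l * y) ≤ 1 + l * y + (exp (l * M) - l * M - 1) / M ^ 2 * y ^ 2 := by
  have hphi : (l * y) ^ 2 * bennettPhi (l * y) ≤ (l * y) ^ 2 * bennettPhi (l * M) :=
    mul_le_mul_of_nonneg_left (bennettPhi_monotone (mul_le_mul_of_nonneg_left hy hl))
      (sq_nonneg _)
  have hquad : (exp (l * M) - l * M - 1) / M ^ 2 * y ^ 2 = (l * y) ^ 2 * bennettPhi (l * M) := by
    rw [exp_sub_sub_one_eq_sq_mul_bennettPhi]
    field_simp
  linarith [exp_sub_sub_one_eq_sq_mul_bennettPhi (l * y)]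

lemma bennettH_pos {x : ℝ} (hx : 0 < x) : 0 < bennettH x := by
  have hlog : log (1 + x)⁻¹ < (1 + x)⁻¹ - 1 :=
    log_lt_sub_one_of_pos (by positivity) (inv_ne_one.2 (by linarith))
  rw [log_inv] at hlog
  have : x = (1 + x) * (1 - (1 + x)⁻¹) := by field_simp; ring
  rw [bennettH]
  nlinarith

section Bennett

variable {Ω : Type*} [MeasurableSpace Ω] {μ : Measure Ω} [IsProbabilityMeasure μ]

lemma mgf_le_exp_bennett {Y : Ω → ℝ} (hY : AEMeasurable Y μ) {M v l : ℝ} (hM : M ≠ 0)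
    (hl : 0 ≤ l) (hbdd : ∀ᵐ ω ∂μ, |Y ω| ≤ M) (hmean : μ[Y] = 0) (hvar : ∫ ω, Y ω ^ 2 ∂μ ≤ v) :
    mgf Y μ l ≤ exp ((exp (l * M) - l * M - 1) / M ^ 2 * v) := by
  set c := (exp (l * M) - l * M - 1) / M ^ 2
  have hc : 0 ≤ c := div_nonneg (by linarith [add_one_le_exp (l * M)]) (sq_nonneg M)
  have hle : ∀ᵐ ω ∂μ, Y ω ≤ M := hbdd.mono fun ω hω => (le_abs_self _).trans hω
  have hint : Integrable Y μ := .of_bound hY.aestronglyMeasurable M hbdd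
  have hint_sq : Integrable (fun ω => Y ω ^ 2) μ :=
    .of_bound (hY.pow_const 2).aestronglyMeasurable (M ^ 2) <| hbdd.mono fun ω hω => by
      simpa [abs_pow] using pow_le_pow_left₀ (abs_nonneg _) hω 2
  calc mgf Y μ l ≤ ∫ ω, (1 + l * Y ω + c * Y ω ^ 2) ∂μ :=
        integral_mono_ae (integrable_exp_mul_of_le l M hl hY hle) (by fun_prop)
          (hle.mono fun ω hω => exp_mul_le_of_le hl hM hω)
    _ = 1 + c * ∫ ω, Y ω ^ 2 ∂μ := by
        rw [integral_add (by fun_prop) (by fun_prop), integral_add (by fun_prop) (by fun_prop)]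
        simp [integral_const_mul, hmean]
    _ ≤ 1 + c * v := by gcongr
    _ ≤ exp (c * v) := by linarith [add_one_le_exp (c * v)]

theorem measureReal_sum_ge_le_exp_bennett {ι : Type*} [Fintype ι] {Y : ι → Ω → ℝ}
    (hmeas : ∀ i, Measurable (Y i)) (hindep : iIndepFun Y μ) {M v s : ℝ} (hM : 0 < M)
    (hs : 0 ≤ s) (hbdd : ∀ i, ∀ᵐ ω ∂μ, |Y i ω| ≤ M) (hmean : ∀ i, μ[Y i] = 0)
    (hvar : ∀ i, ∫ ω, Y i ω ^ 2 ∂μ ≤ v) :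
    μ.real {ω | Fintype.card ι * v * s / M ≤ ∑ i, Y i ω} ≤
      exp (-(Fintype.card ι * v / M ^ 2 * bennettH s)) := by
  set t := Fintype.card ι * v * s / M
  -- the Chernoff parameter minimising the resulting bound
  set l := log (1 + s) / M
  have hl : 0 ≤ l := div_nonneg (log_nonneg (by linarith)) hM.le
  have hlM : l * M = log (1 + s) := div_mul_cancel₀ _ hM.ne'
  have hint : ∀ i, Integrable (fun ω => exp (l * Y i ω)) μ := fun i =>
    integrable_exp_mul_of_le l M hl (hmeas i).aemeasurable
      ((hbdd i).mono fun ω hω => (le_abs_self _).trans hω)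
  calc μ.real {ω | t ≤ ∑ i, Y i ω} = μ.real {ω | t ≤ (∑ i, Y i) ω} := by
        simp only [Finset.sum_apply]
    _ ≤ exp (-l * t) * mgf (∑ i, Y i) μ l :=
        measure_ge_le_exp_mul_mgf t hl (hindep.integrable_exp_mul_sum hmeas fun i _ => hint i)
    _ = exp (-l * t) * ∏ i, mgf (Y i) μ l := by rw [hindep.mgf_sum hmeas]
    _ ≤ exp (-l * t) * ∏ _i : ι, exp ((exp (l * M) - l * M - 1) / M ^ 2 * v) := by
        gcongr with i
        · exact fun i _ => mgf_nonneg
        · exact mgf_le_exp_bennett (hmeas i).aemeasurable hM.ne' hl (hbdd i) (hmean i) (hvar i)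
    _ = exp (-(Fintype.card ι * v / M ^ 2 * bennettH s)) := by
        rw [Finset.prod_const, Finset.card_univ, ← exp_nat_mul, ← exp_add, hlM,
          exp_log (by linarith), bennettH]
        congr 1
        simp only [l, t]
        field_simp
        ring

theorem measureReal_sum_le_sub_le_exp_bennett {ι : Type*} [Fintype ι] {X : ι → Ω → ℝ}
    (hmeas : ∀ i, Measurable (X i)) (hindep : iIndepFun X μ) {M v s : ℝ} (hM : 0 < M)
    (hs : 0 ≤ s) (hbdd : ∀ i, ∀ᵐ ω ∂μ, |X i ω - ∫ ω', X i ω' ∂μ| ≤ M)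
    (hvar : ∀ i, variance (X i) μ ≤ v) :
    μ.real {ω | ∑ i, X i ω ≤ (∑ i, ∫ ω', X i ω' ∂μ) - Fintype.card ι * v * s / M} ≤
      exp (-(Fintype.card ι * v / M ^ 2 * bennettH s)) := by
  have hint : ∀ i, Integrable (X i) μ := fun i =>
    .of_bound (hmeas i).aestronglyMeasurable (M + |∫ ω', X i ω' ∂μ|) <|
      (hbdd i).mono fun ω hω => by
        rw [norm_eq_abs]
        linarith [abs_sub_abs_le_abs_sub (X i ω) (∫ ω', X i ω' ∂μ)]
  have hindep_centred : iIndepFun (fun i ω => (∫ ω', X i ω' ∂μ) - X i ω) μ :=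
    hindep.comp (fun i x => (∫ ω', X i ω' ∂μ) - x) fun _ => measurable_const.sub measurable_id
  have hupper := measureReal_sum_ge_le_exp_bennett
    (Y := fun i ω => (∫ ω', X i ω' ∂μ) - X i ω) (fun i => measurable_const.sub (hmeas i))
    hindep_centred hM hs (fun i => (hbdd i).mono fun ω hω => by rwa [abs_sub_comm])
    (fun i => by simp [integral_sub (integrable_const _) (hint i)])
    (fun i => by simpa [variance_eq_integral (hmeas i).aemeasurable, sub_sq_comm] using hvar i)
  simpa only [Finset.sum_sub_distrib, le_sub_comm] using hupper

lemma ofReal_one_sub_le_of_measureReal_compl_le {s : Set Ω} {δ : ℝ} (h : μ.real sᶜ ≤ δ) :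
    ENNReal.ofReal (1 - δ) ≤ μ s := by
  have hunion : 1 ≤ μ.real s + μ.real sᶜ := by
    simpa [Set.union_compl_self] using measureReal_union_le (μ := μ) s sᶜ
  rw [← ofReal_measureReal]
  exact ENNReal.ofReal_le_ofReal (by linarith)

end Bennett

lemma exp_neg_mul_bennettH_le {n M σ s δ : ℝ} (hM : 0 < M) (hσ : 0 < σ) (hs : 0 < s)
    (hδ : 0 < δ) (hn : n > M ^ 2 / (σ ^ 2 * bennettH s) * log (1 / δ)) :
    exp (-(n * σ ^ 2 / M ^ 2 * bennettH s)) ≤ δ := by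
  have := bennettH_pos hs
  rw [gt_iff_lt, div_mul_eq_mul_div, div_lt_iff₀ (by positivity), one_div, log_inv] at hn
  have hlog : -log δ ≤ n * σ ^ 2 / M ^ 2 * bennettH s := by
    rw [div_mul_eq_mul_div, le_div_iff₀ (by positivity)]
    linarith
  simpa [exp_log hδ] using exp_le_exp.2 (neg_le.1 hlog)

lemma prod_mul_exp_neg_le_of_le_sum {ι : Type*} [Fintype ι] {p z : ι → ℝ} {c : ℝ}
    (hp : ∀ i, 0 ≤ p i) (hz : c ≤ ∑ i, z i) :
    ∏ i, p i * exp (-z i) ≤ (∏ i, p i) * exp (-c) := by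
  rw [Finset.prod_mul_distrib, ← exp_sum, Finset.sum_neg_distrib]
  gcongr
  exact Finset.prod_nonneg fun i _ => hp i

theorem composed_probability_exponential_decrease_general
    {Ω : Type*} [MeasurableSpace Ω] (μ : Measure Ω) [IsProbabilityMeasure μ]
    (ε δ M Δ σ : ℝ) (hε : ε ∈ Set.Ioo (0 : ℝ) (1 / 2)) (hδ : δ ∈ Set.Ioo (0 : ℝ) 1)
    (hM : 0 < M) (hΔ : 0 < Δ) (hσ : 0 < σ)
    (n : ℕ) (X : Fin n → Ω → ℝ) (hmeas : ∀ i, Measurable (X i))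
    (hindep : iIndepFun X μ)
    (p : Fin n → ℝ) (hp : ∀ i, p i ∈ Set.Icc ε (1 - ε))
    (Z : Fin n → Ω → ℝ)
    (hZ : ∀ i ω, Z i ω = Real.log (p i + (1 - p i) * Real.exp (X i ω)))
    (hmean : ∀ i, Δ ≤ ∫ ω, Z i ω ∂μ)
    (hvar : ∀ i, variance (Z i) μ ≤ σ ^ 2)
    (hbddZ : ∀ i, ∀ᵐ ω ∂μ, |Z i ω - ∫ ω', Z i ω' ∂μ| ≤ M)
    (hn : (n : ℝ) > M ^ 2 / (σ ^ 2 * bennettH (3 * Δ * M / (4 * σ ^ 2)))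
            * Real.log (1 / δ)) :
    ENNReal.ofReal (1 - δ)
      ≤ μ {ω | ∏ i, p i * Real.exp (-Z i ω)
            ≤ (∏ i, p i) * Real.exp (-(Δ * n) / 4)} := by
  set s := 3 * Δ * M / (4 * σ ^ 2)
  have hZ_comp : Z = fun i => (fun x => log (p i + (1 - p i) * exp x)) ∘ X i :=
    funext fun i => funext (hZ i)
  have hZmeas : ∀ i, Measurable (Z i) := fun i => by rw [hZ_comp]; fun_prop
  have htail := measureReal_sum_le_sub_le_exp_bennett hZmeas
    (hZ_comp ▸ hindep.comp _ fun i => by fun_prop) hM (by positivity : 0 ≤ s) hbddZ hvar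
  rw [Fintype.card_fin] at htail
  have hevent : {ω | ∏ i, p i * exp (-Z i ω) ≤ (∏ i, p i) * exp (-(Δ * n) / 4)}ᶜ ⊆
      {ω | ∑ i, Z i ω ≤ (∑ i, ∫ ω', Z i ω' ∂μ) - n * σ ^ 2 * s / M} := by
    intro ω hω
    by_contra hlow
    apply hω
    rw [Set.mem_ofPred_eq, neg_div]
    refine prod_mul_exp_neg_le_of_le_sum (fun i => hε.1.le.trans (hp i).1) ?_
    have hsum_mean : n * Δ ≤ ∑ i, ∫ ω', Z i ω' ∂μ := by
      simpa using Finset.sum_le_sum fun i (_ : i ∈ Finset.univ) => hmean i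
    have hs : n * σ ^ 2 * s / M = 3 * Δ * n / 4 := by simp only [s]; field_simp
    rw [Set.mem_ofPred_eq, not_le] at hlow
    linarith
  exact ofReal_one_sub_le_of_measureReal_compl_le
    ((measureReal_mono hevent).trans
      (htail.trans (exp_neg_mul_bennettH_le hM hσ (by positivity) hδ.1 hn)))

/-- The probabilistic core of Lemma 1: with `pᵢ ∈ [ε, 1-ε]` the correct-token
probabilities, `Xᵢ` independent symmetric bounded non-degenerate logit noises,
and `Zᵢ := log(pᵢ + (1-pᵢ)·exp(Xᵢ))` the renormalizing terms satisfying
`E[Zᵢ] ≥ Δ`, `Var(Zᵢ) ≤ σ²`, `|Zᵢ - E[Zᵢ]| ≤ M` a.s., if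
`n > (M²/(σ²·h(3ΔM/(4σ²))))·log(1/δ)` then with probability at least `1 - δ`,
`Πᵢ pᵢ·exp(-Zᵢ) ≤ (Πᵢ pᵢ)·exp(-Δ·n/4)`. -/
theorem composed_probability_exponential_decrease
    {Ω : Type*} [MeasurableSpace Ω] (μ : Measure Ω) [IsProbabilityMeasure μ]
    (ε δ M Δ σ : ℝ) (hε : ε ∈ Set.Ioo (0 : ℝ) (1 / 2)) (hδ : δ ∈ Set.Ioo (0 : ℝ) 1)
    (hM : 0 < M) (hΔ : 0 < Δ) (hσ : 0 < σ)
    (n : ℕ) (X : Fin n → Ω → ℝ) (hmeas : ∀ i, Measurable (X i))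
    (hindep : iIndepFun X μ)
    (hsym : ∀ i, μ.map (X i) = μ.map (fun ω => -X i ω))
    (hbddX : ∀ i, ∀ᵐ ω ∂μ, |X i ω| ≤ M)
    (hnondeg : ∀ i, μ {ω | X i ω = 0} < 1)
    (p : Fin n → ℝ) (hp : ∀ i, p i ∈ Set.Icc ε (1 - ε))
    (Z : Fin n → Ω → ℝ)
    (hZ : ∀ i ω, Z i ω = Real.log (p i + (1 - p i) * Real.exp (X i ω)))
    (hmean : ∀ i, Δ ≤ ∫ ω, Z i ω ∂μ)
    (hvar : ∀ i, variance (Z i) μ ≤ σ ^ 2)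
    (hbddZ : ∀ i, ∀ᵐ ω ∂μ, |Z i ω - ∫ ω', Z i ω' ∂μ| ≤ M)
    (hn : (n : ℝ) > M ^ 2 / (σ ^ 2 * bennettH (3 * Δ * M / (4 * σ ^ 2)))
            * Real.log (1 / δ)) :
    ENNReal.ofReal (1 - δ)
      ≤ μ {ω | ∏ i, p i * Real.exp (-Z i ω)
            ≤ (∏ i, p i) * Real.exp (-(Δ * n) / 4)} :=
  composed_probability_exponential_decrease_general μ ε δ M Δ σ hε hδ hM hΔ hσ n X hmeas hindep p hp
    Z hZ hmean hvar hbddZ hn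
end
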